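/- The list operational-transformation functions satisfy CP1 for an insert and a delete: for any list σ, insertion o1 = Ins(a, p1) and deletion o2 = Del(p2) with p1, p2 within bounds (p1 ≤ length σ, p2 < length σ), applying o1 then OT(o2, o1) yields the same list as applying o2 then OT(o1, o2), where OT(Ins(a,p1), Del(p2)) = Ins(a,p1) if p1 ≤ p2 else Ins(a,p1−1), and OT(Del(p2), Ins(a,p1)) = Del(p2) if p2 < p1 else Del(p2+1). -/

import Mathlib

/-- Insert `a` at position `p` in list `σ`. -/
def insL {U : Type*} (a : U) (p : ℕ) (σ : List U) : List U :=
  σ.take p ++ a :: σ.drop p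

/-- Delete the element at position `p` of list `σ`. -/
def delL {U : Type*} (p : ℕ) (σ : List U) : List U :=
  σ.take p ++ σ.drop (p + 1)

section

variable {U : Type*} (a x : U) (p : ℕ) (σ : List U)

@[simp]
theorem insL_zero : insL a 0 σ = a :: σ := rfl

@[simp]
theorem insL_nil : insL a p [] = [a] := by
  simp [insL]

@[simp]
theorem insL_succ_cons : insL a (p + 1) (x :: σ) = x :: insL a p σ := rfl

@[simp]
theorem delL_nil : delL p ([] : List U) = [] := by
  simp [delL]

@[simp]
theorem delL_zero_cons : delL 0 (x :: σ) = σ := rfl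

@[simp]
theorem delL_succ_cons : delL (p + 1) (x :: σ) = x :: delL p σ := rfl

end

theorem delL_succ_insL_of_le {U : Type*} (a : U) {p1 p2 : ℕ} {σ : List U} (h : p1 ≤ p2) :
    delL (p2 + 1) (insL a p1 σ) = insL a p1 (delL p2 σ) := by
  induction σ generalizing p1 p2 with
  | nil => simp
  | cons x σ ih =>
    cases p1 with
    | zero => simp
    | succ p1 =>
      obtain ⟨p2, rfl⟩ : ∃ q, p2 = q + 1 := ⟨p2 - 1, by omega⟩
      simp [ih (Nat.le_of_succ_le_succ h)]

theorem delL_insL_of_lt {U : Type*} (a : U) {p1 p2 : ℕ} {σ : List U} (h : p2 < p1)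
    (hσ : p2 < σ.length) : delL p2 (insL a p1 σ) = insL a (p1 - 1) (delL p2 σ) := by
  induction σ generalizing p1 p2 with
  | nil => simp at hσ
  | cons x σ ih =>
    obtain ⟨p1, rfl⟩ : ∃ q, p1 = q + 1 := ⟨p1 - 1, by omega⟩
    cases p2 with
    | zero => simp
    | succ p2 =>
      obtain ⟨p1, rfl⟩ : ∃ q, p1 = q + 1 := ⟨p1 - 1, by omega⟩
      simp [ih (by omega : p2 < p1 + 1) (by simpa using hσ)]

theorem cp1_ins_del {U : Type*} (σ : List U) (a : U) (p1 p2 : ℕ)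
    (h2 : p2 < σ.length) :
    delL (if p2 < p1 then p2 else p2 + 1) (insL a p1 σ) =
    insL a (if p1 ≤ p2 then p1 else p1 - 1) (delL p2 σ) := by
  split_ifs with hlt hle hle
  · omega
  · exact delL_insL_of_lt a hlt h2
  · exact delL_succ_insL_of_le a hle
  · omega
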